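/- Let C be an operation satisfying Inclusion, 2-special Cut, and Cautious Monotonicity. Then its transform C' (defined by C'(X) = {a : ∃ finite A ⊆ X such that a ∈ C(A ∪ Z) for all Z ⊆ C(X)}) satisfies Cut. -/
import Mathlib


/-- The transform C' of an operation C. -/
def transform {L : Type*} (C : Set L → Set L) (X : Set L) : Set L :=
  {a | ∃ A : Set L, A.Finite ∧ A ⊆ X ∧ ∀ Z : Set L, Z ⊆ C X → a ∈ C (A ∪ Z)}

/-- if C satisfies Inclusion, 2-special Cut and Cautious
Monotonicity, then its transform satisfies Cut. -/
theorem stmt_6 {L : Type*} (C : Set L → Set L)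
    (hCInc : ∀ X : Set L, X ⊆ C X)
    (h2Cut : ∀ (X B : Set L), B.Finite → B ⊆ C X → C (X ∪ B) ⊆ C X)
    (hCM : ∀ X Y : Set L, Y ⊆ C X → C X ⊆ C (X ∪ Y)) :
    ∀ X Y : Set L, Y ⊆ transform C X → transform C (X ∪ Y) ⊆ transform C X := by
  intro X Y hY a ha
  obtain ⟨A, hAfin, hAsub, hA⟩ := ha
  -- Y ⊆ C X
  have hYCX : Y ⊆ C X := by
    intro y hy
    obtain ⟨B, hBfin, hBsub, hB⟩ := hY hy
    have hyB := hB X (hCInc X)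
    rwa [Set.union_eq_self_of_subset_left hBsub] at hyB
  have hCXCXY : C X ⊆ C (X ∪ Y) := hCM X Y hYCX
  -- choose witnesses for elements of Y
  choose f hffin hfsub hf using fun (b : L) (hb : b ∈ Y) => hY hb
  classical
  set g : L → Set L := fun b => if hb : b ∈ Y then f b hb else ∅ with hg
  have hgfin : ∀ b, (g b).Finite := by
    intro b; by_cases hb : b ∈ Y
    · simp only [hg, dif_pos hb]; exact hffin b hb
    · simp only [hg, dif_neg hb]; exact Set.finite_empty
  have hgsub : ∀ b, g b ⊆ X := by
    intro b; by_cases hb : b ∈ Y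
    · simp only [hg, dif_pos hb]; exact hfsub b hb
    · simp only [hg, dif_neg hb]; exact Set.empty_subset X
  set A₂ : Set L := A ∩ Y with hA₂
  have hA₂fin : A₂.Finite := hAfin.inter_of_left _
  set A' : Set L := (A ∩ X) ∪ ⋃ b ∈ A₂, g b with hA'
  have hA'fin : A'.Finite :=
    (hAfin.inter_of_left _).union (hA₂fin.biUnion fun b _ => hgfin b)
  have hA'sub : A' ⊆ X := by
    apply Set.union_subset Set.inter_subset_right
    exact Set.iUnion₂_subset fun b _ => hgsub b
  refine ⟨A', hA'fin, hA'sub, ?_⟩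
  intro Z hZ
  have hsub : A' ∪ Z ⊆ C X :=
    Set.union_subset (hA'sub.trans (hCInc X)) hZ
  have hsub' : A' ∪ Z ⊆ C (X ∪ Y) := hsub.trans hCXCXY
  have ha' : a ∈ C (A ∪ (A' ∪ Z)) := hA (A' ∪ Z) hsub'
  have heq : A ∪ (A' ∪ Z) = (A' ∪ Z) ∪ A₂ := by
    apply Set.Subset.antisymm
    · intro x hx
      rcases hx with hx | hx
      · rcases hAsub hx with hxX | hxY
        · exact Or.inl (Or.inl (Or.inl ⟨hx, hxX⟩))
        · exact Or.inr ⟨hx, hxY⟩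
      · exact Or.inl hx
    · intro x hx
      rcases hx with hx | hx
      · exact Or.inr hx
      · exact Or.inl hx.1
  rw [heq] at ha'
  have hB₂ : A₂ ⊆ C (A' ∪ Z) := by
    intro b hb
    have hbY : b ∈ Y := hb.2
    have hfb : f b hbY ⊆ A' ∪ Z := by
      intro x hx
      refine Or.inl (Or.inr ?_)
      refine Set.mem_biUnion hb ?_
      simpa only [hg, dif_pos hbY] using hx
    have := hf b hbY (A' ∪ Z) hsub
    rwa [Set.union_eq_self_of_subset_left hfb] at this
  exact h2Cut (A' ∪ Z) A₂ hA₂fin hB₂ ha'
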